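/- The matrices G₁ = [[1,0,-i],[-1-i,1,-1+i],[-1-i,1-i,i]], G₂ = [[1,1-i,-1+i],[-1-i,-1,1-i],[-1+i,1+i,-1-2i]], G₃ = [[i,1+i,-i],[1-i,-1-2i,2i],[-1-i,-3+i,3+2i]], G₄ = [[-i,0,0],[-1+i,-1,0],[-1+i,-1+i,-i]] all lie in SU(2,1) with entries in the Gaussian integers ℤ[i]. -/

import Mathlib

open Complex Matrix

noncomputable section

def formJ : Matrix (Fin 3) (Fin 3) ℂ := !![0, 0, 1; 0, 1, 0; 1, 0, 0]

def InSU21 (M : Matrix (Fin 3) (Fin 3) ℂ) : Prop :=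
  M.conjTranspose * formJ * M = formJ ∧ M.det = 1

/-- The entries of `M` are Gaussian integers. -/
def GaussianEntries (M : Matrix (Fin 3) (Fin 3) ℂ) : Prop :=
  ∀ i j : Fin 3, ∃ a b : ℤ, M i j = (a : ℂ) + (b : ℂ) * Complex.I

def W₁ : Matrix (Fin 3) (Fin 3) ℂ :=
  !![1, 0, -Complex.I;
     -1 - Complex.I, 1, -1 + Complex.I;
     -1 - Complex.I, 1 - Complex.I, Complex.I]

def W₂ : Matrix (Fin 3) (Fin 3) ℂ :=
  !![1, 1 - Complex.I, -1 + Complex.I;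
     -1 - Complex.I, -1, 1 - Complex.I;
     -1 + Complex.I, 1 + Complex.I, -1 - 2 * Complex.I]

def W₃ : Matrix (Fin 3) (Fin 3) ℂ :=
  !![Complex.I, 1 + Complex.I, -Complex.I;
     1 - Complex.I, -1 - 2 * Complex.I, 2 * Complex.I;
     -1 - Complex.I, -3 + Complex.I, 3 + 2 * Complex.I]

def W₄ : Matrix (Fin 3) (Fin 3) ℂ :=
  !![-Complex.I, 0, 0;
     -1 + Complex.I, -1, 0;
     -1 + Complex.I, -1 + Complex.I, -Complex.I]

open GaussianInt in
theorem closure_I_eq_range_toComplex : Subring.closure {I} = toComplex.range := by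
  refine le_antisymm ?_ ?_
  · exact Subring.closure_le.2 <| Set.singleton_subset_iff.2 ⟨⟨0, 1⟩, by simp [toComplex_def]⟩
  · rintro _ ⟨z, rfl⟩
    rw [toComplex_def]
    exact add_mem (intCast_mem _ _) (mul_mem (intCast_mem _ _) (Subring.subset_closure rfl))

open GaussianInt in
theorem mem_closure_I_iff (z : ℂ) : z ∈ Subring.closure {I} ↔ ∃ a b : ℤ, z = a + b * I := by
  rw [closure_I_eq_range_toComplex]
  constructor
  · rintro ⟨x, rfl⟩
    exact ⟨x.re, x.im, toComplex_def x⟩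
  · rintro ⟨a, b, rfl⟩
    exact ⟨⟨a, b⟩, toComplex_def' a b⟩

theorem whitehead_generators_gaussianEntries :
    GaussianEntries W₁ ∧ GaussianEntries W₂ ∧ GaussianEntries W₃ ∧ GaussianEntries W₄ := by
  have hI : I ∈ Subring.closure {I} := Subring.subset_closure rfl
  simp only [GaussianEntries, ← mem_closure_I_iff]
  refine ⟨?_, ?_, ?_, ?_⟩ <;> intro i j <;> fin_cases i <;> fin_cases j <;>
    simp only [W₁, W₂, W₃, W₄, of_apply, cons_val', cons_val_zero, cons_val_one, cons_val_two,
      empty_val', cons_val_fin_one, Fin.zero_eta, Fin.mk_one, Fin.reduceFinMk] <;>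
    apply_rules [add_mem, sub_mem, neg_mem, mul_mem, one_mem, zero_mem, ofNat_mem]

theorem whitehead_generators_inSU21 : InSU21 W₁ ∧ InSU21 W₂ ∧ InSU21 W₃ ∧ InSU21 W₄ := by
  refine ⟨⟨?_, ?_⟩, ⟨?_, ?_⟩, ⟨?_, ?_⟩, ⟨?_, ?_⟩⟩ <;>
    simp [W₁, W₂, W₃, W₄, formJ, ← Matrix.ext_iff, mul_apply, Fin.sum_univ_three,
      Fin.forall_fin_succ, det_fin_three, Complex.ext_iff] <;>
    norm_num

/-- The Whitehead link holonomy generators lie in `SU(2,1)` and have entries in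
the Gaussian integers `ℤ[i]`. -/
theorem whitehead_generators_in_SU21 :
    (InSU21 W₁ ∧ GaussianEntries W₁) ∧ (InSU21 W₂ ∧ GaussianEntries W₂) ∧
    (InSU21 W₃ ∧ GaussianEntries W₃) ∧ (InSU21 W₄ ∧ GaussianEntries W₄) := by
  obtain ⟨h₁, h₂, h₃, h₄⟩ := whitehead_generators_inSU21
  obtain ⟨g₁, g₂, g₃, g₄⟩ := whitehead_generators_gaussianEntries
  exact ⟨⟨h₁, g₁⟩, ⟨h₂, g₂⟩, ⟨h₃, g₃⟩, ⟨h₄, g₄⟩⟩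

end
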